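/- Let μ : P → ℝ be locally bounded and locally integrable, and suppose there is a monotonically decreasing function b : ℝ → ℝ such that μ(α,β) ≥ 0 whenever α ≥ b(β) and μ(α,β) ≤ 0 whenever α ≤ b(β). Fix a boundary point (α₁,β₁) with α₁ = b(β₁) and α₁ > β₁. Assume the divergence conditions: ∬_{{α₁<α<λ, β₁<β<α}} μ(α,β)(α−β) dα dβ → ∞ as λ → ∞, and ∬_{{λ<β<β₁, β<α<α₁}} (−μ(α,β))(α−β) dα dβ → ∞ as λ → −∞. Then there exist u_min ≤ β₁ and u_max ≥ α₁, with u_min = β₁ or u_max = α₁, such that ∬_{T(u_min,u_max)} μ(α,β)·(α − β) dα dβ = 0; i.e. the major hysteresis loop of the Preisach operator with weighting μ generated by a periodic input with minimum u_min and maximum u_max encloses zero signed area, so this Preisach operator is a butterfly hysteresis operator. -/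

import Mathlib

/-!
Let `ν(α, β) = μ(α, β) (α - β)` and `c = ∬_{T(β₁, α₁)} ν`. The integral of `ν` over `T(β₁, t)`
is continuous in `t` (dominated convergence: only the null line `α = t` moves), equals `c` at
`t = α₁`, and for `t ≥ α₁` exceeds `c` by at least the upper partial moment, since
`α > α₁ = b(β₁) ≥ b(β)` on the added strip, where therefore `ν ≥ 0`. So if `c ≤ 0`, the
divergence of the upper moment and the intermediate value theorem give `u_max ≥ α₁` with
`∬_{T(β₁, u_max)} ν = 0`. If `c ≥ 0`, the mirror argument below `β₁`, where `ν ≤ 0`, gives `u_min`.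
-/

open MeasureTheory

/-- The triangular subregion `T(b₀,a₀) = {(α,β) : b₀ ≤ β ≤ α ≤ a₀}` of the
Preisach plane (points are `p = (α, β)`). -/
def preisachTriangle (b₀ a₀ : ℝ) : Set (ℝ × ℝ) :=
  {p : ℝ × ℝ | b₀ ≤ p.2 ∧ p.2 ≤ p.1 ∧ p.1 ≤ a₀}

open Filter Set Topology

section SetIntegral

variable {X : Type*} [MeasurableSpace X] {μ : Measure X} {f : X → ℝ}

theorem continuous_setIntegral_setOf_le {g : X → ℝ} (hf : Integrable f μ) (hg : Measurable g)
    (hlevel : ∀ t, μ {x | g x = t} = 0) :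
    Continuous fun t => ∫ x in {x | g x ≤ t}, f x ∂μ := by
  have hmeas : ∀ t, MeasurableSet {x | g x ≤ t} := fun t => measurableSet_le hg measurable_const
  simp_rw [← integral_indicator (hmeas _)]
  refine continuous_iff_continuousAt.2 fun t₀ => continuousAt_of_dominated
    (Eventually.of_forall fun t => (hf.indicator (hmeas t)).aestronglyMeasurable)
    (Eventually.of_forall fun t => Eventually.of_forall fun x => norm_indicator_le_norm_self _ _)
    hf.norm ?_
  filter_upwards [measure_eq_zero_iff_ae_notMem.1 (hlevel t₀)] with x hx
  rcases lt_or_gt_of_ne hx with h | h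
  · exact (continuousAt_const (y := f x)).congr <| (eventually_gt_nhds h).mono fun t ht =>
      (indicator_of_mem (s := {y | g y ≤ t}) ht.le f).symm
  · exact (continuousAt_const (y := 0)).congr <| (eventually_lt_nhds h).mono fun t ht =>
      (indicator_of_notMem (s := {y | g y ≤ t}) (not_le.2 ht) f).symm

theorem continuous_setIntegral_setOf_ge {g : X → ℝ} (hf : Integrable f μ) (hg : Measurable g)
    (hlevel : ∀ t, μ {x | g x = t} = 0) :
    Continuous fun t => ∫ x in {x | t ≤ g x}, f x ∂μ := by
  have hneg := continuous_setIntegral_setOf_le hf hg.neg fun t => by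
    simpa only [Pi.neg_apply, neg_eq_iff_eq_neg] using hlevel (-t)
  simpa only [Function.comp_def, Pi.neg_apply, neg_le_neg_iff] using hneg.comp continuous_neg

theorem setIntegral_add_setIntegral_le_of_nonneg_on_sdiff {s t u : Set X} (hs : MeasurableSet s)
    (ht : MeasurableSet t) (hst : s ⊆ t) (hf : IntegrableOn f t μ) (hpos : ∀ x ∈ t \ s, 0 ≤ f x)
    (hu : u ⊆ t \ s) :
    ∫ x in s, f x ∂μ + ∫ x in u, f x ∂μ ≤ ∫ x in t, f x ∂μ := by
  have h := setIntegral_mono_set (hf.mono_set sdiff_subset)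
    (ae_restrict_of_forall_mem (ht.diff hs) hpos) hu.eventuallyLE
  rw [setIntegral_sdiff hs hf hst] at h
  linarith

end SetIntegral

theorem volume_setOf_fst_eq (t : ℝ) : volume {p : ℝ × ℝ | p.1 = t} = 0 := by
  rw [show {p : ℝ × ℝ | p.1 = t} = {t} ×ˢ univ by ext; simp, Measure.volume_eq_prod,
    Measure.prod_prod, Real.volume_singleton, zero_mul]

theorem volume_setOf_snd_eq (t : ℝ) : volume {p : ℝ × ℝ | p.2 = t} = 0 := by
  rw [show {p : ℝ × ℝ | p.2 = t} = univ ×ˢ {t} by ext; simp, Measure.volume_eq_prod,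
    Measure.prod_prod, Real.volume_singleton, mul_zero]

section PreisachTriangle

variable {ν : ℝ × ℝ → ℝ}

theorem measurableSet_preisachTriangle (b₀ a₀ : ℝ) : MeasurableSet (preisachTriangle b₀ a₀) :=
  (measurableSet_le measurable_const measurable_snd).inter
    ((measurableSet_le measurable_snd measurable_fst).inter
      (measurableSet_le measurable_fst measurable_const))

theorem isCompact_preisachTriangle (b₀ a₀ : ℝ) : IsCompact (preisachTriangle b₀ a₀) :=
  (isCompact_Icc.prod isCompact_Icc).of_isClosed_subset
    ((isClosed_le continuous_const continuous_snd).inter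
      ((isClosed_le continuous_snd continuous_fst).inter
        (isClosed_le continuous_fst continuous_const)))
    fun _ ⟨h₁, h₂, h₃⟩ => ⟨⟨h₁.trans h₂, h₃⟩, h₁, h₂.trans h₃⟩

theorem preisachTriangle_eq_setOf_fst_le_inter {b₀ t a₀ : ℝ} (h : t ≤ a₀) :
    preisachTriangle b₀ t = {p | p.1 ≤ t} ∩ preisachTriangle b₀ a₀ := by
  ext p
  exact ⟨fun ⟨h₁, h₂, h₃⟩ => ⟨h₃, h₁, h₂, h₃.trans h⟩, fun ⟨h₃, h₁, h₂, _⟩ => ⟨h₁, h₂, h₃⟩⟩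

theorem preisachTriangle_eq_setOf_le_snd_inter {b₀ t a₀ : ℝ} (h : b₀ ≤ t) :
    preisachTriangle t a₀ = {p | t ≤ p.2} ∩ preisachTriangle b₀ a₀ := by
  ext p
  exact ⟨fun ⟨h₁, h₂, h₃⟩ => ⟨h₁, h.trans h₁, h₂, h₃⟩, fun ⟨h₁, _, h₂, h₃⟩ => ⟨h₁, h₂, h₃⟩⟩

theorem continuous_setIntegral_preisachTriangle_right (hν : LocallyIntegrable ν volume)
    (b₀ : ℝ) : Continuous fun t => ∫ p in preisachTriangle b₀ t, ν p := by
  refine continuous_iff_continuousAt.2 fun t₀ => ?_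
  have hcont := continuous_setIntegral_setOf_le
    (hν.integrableOn_isCompact (isCompact_preisachTriangle b₀ (t₀ + 1))) measurable_fst
    fun t => nonpos_iff_eq_zero.1 ((Measure.restrict_apply_le _ _).trans_eq (volume_setOf_fst_eq t))
  refine hcont.continuousAt.congr <| (eventually_lt_nhds (lt_add_one t₀)).mono fun t ht => ?_
  dsimp only
  rw [Measure.restrict_restrict (measurableSet_le measurable_fst measurable_const),
    ← preisachTriangle_eq_setOf_fst_le_inter ht.le]

theorem continuous_setIntegral_preisachTriangle_left (hν : LocallyIntegrable ν volume)
    (a₀ : ℝ) : Continuous fun t => ∫ p in preisachTriangle t a₀, ν p := by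
  refine continuous_iff_continuousAt.2 fun t₀ => ?_
  have hcont := continuous_setIntegral_setOf_ge
    (hν.integrableOn_isCompact (isCompact_preisachTriangle (t₀ - 1) a₀)) measurable_snd
    fun t => nonpos_iff_eq_zero.1 ((Measure.restrict_apply_le _ _).trans_eq (volume_setOf_snd_eq t))
  refine hcont.continuousAt.congr <| (eventually_gt_nhds (sub_one_lt t₀)).mono fun t ht => ?_
  dsimp only
  rw [Measure.restrict_restrict (measurableSet_le measurable_const measurable_snd),
    ← preisachTriangle_eq_setOf_le_snd_inter ht.le]

def upperMomentRegion (b₀ a₀ t : ℝ) : Set (ℝ × ℝ) :=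
  {p : ℝ × ℝ | a₀ < p.1 ∧ p.1 < t ∧ b₀ < p.2 ∧ p.2 < p.1}

def lowerMomentRegion (b₀ a₀ t : ℝ) : Set (ℝ × ℝ) :=
  {p : ℝ × ℝ | t < p.2 ∧ p.2 < b₀ ∧ p.2 < p.1 ∧ p.1 < a₀}

variable {b₀ a₀ : ℝ}

theorem exists_setIntegral_preisachTriangle_right_eq_zero (hν : LocallyIntegrable ν volume)
    (hpos : ∀ p : ℝ × ℝ, b₀ ≤ p.2 → p.2 ≤ p.1 → a₀ < p.1 → 0 ≤ ν p)
    (hc : ∫ p in preisachTriangle b₀ a₀, ν p ≤ 0)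
    (hdiv : Tendsto (fun t => ∫ p in upperMomentRegion b₀ a₀ t, ν p) atTop atTop) :
    ∃ u, a₀ ≤ u ∧ ∫ p in preisachTriangle b₀ u, ν p = 0 := by
  obtain ⟨Λ, hΛ, haΛ⟩ := ((hdiv.eventually_ge_atTop
    (-∫ p in preisachTriangle b₀ a₀, ν p)).and (eventually_ge_atTop a₀)).exists
  have hgrow := setIntegral_add_setIntegral_le_of_nonneg_on_sdiff (u := upperMomentRegion b₀ a₀ Λ)
    (measurableSet_preisachTriangle b₀ a₀) (measurableSet_preisachTriangle b₀ Λ)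
    (fun p ⟨h₁, h₂, h₃⟩ => ⟨h₁, h₂, h₃.trans haΛ⟩)
    (hν.integrableOn_isCompact (isCompact_preisachTriangle b₀ Λ))
    (fun p ⟨⟨h₁, h₂, _⟩, h⟩ => hpos p h₁ h₂ (not_le.1 fun h₃ => h ⟨h₁, h₂, h₃⟩))
    (fun p ⟨h₁, h₂, h₃, h₄⟩ => ⟨⟨h₃.le, h₄.le, h₂.le⟩, fun h => h.2.2.not_gt h₁⟩)
  obtain ⟨u, hu, hu0⟩ := intermediate_value_Icc haΛ
    (continuous_setIntegral_preisachTriangle_right hν b₀).continuousOn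
    (show (0 : ℝ) ∈ Icc _ _ from ⟨hc, by linarith⟩)
  exact ⟨u, hu.1, hu0⟩

theorem exists_setIntegral_preisachTriangle_left_eq_zero (hν : LocallyIntegrable ν volume)
    (hneg : ∀ p : ℝ × ℝ, p.2 < b₀ → p.2 ≤ p.1 → p.1 ≤ a₀ → ν p ≤ 0)
    (hc : 0 ≤ ∫ p in preisachTriangle b₀ a₀, ν p)
    (hdiv : Tendsto (fun t => ∫ p in lowerMomentRegion b₀ a₀ t, -ν p) atBot atTop) :
    ∃ u, u ≤ b₀ ∧ ∫ p in preisachTriangle u a₀, ν p = 0 := by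
  obtain ⟨Λ, hΛ, hΛb⟩ := ((hdiv.eventually_ge_atTop
    (∫ p in preisachTriangle b₀ a₀, ν p)).and (eventually_le_atBot b₀)).exists
  have hgrow := setIntegral_add_setIntegral_le_of_nonneg_on_sdiff (u := lowerMomentRegion b₀ a₀ Λ)
    (measurableSet_preisachTriangle b₀ a₀) (measurableSet_preisachTriangle Λ a₀)
    (fun p ⟨h₁, h₂, h₃⟩ => ⟨hΛb.trans h₁, h₂, h₃⟩)
    (hν.neg.integrableOn_isCompact (isCompact_preisachTriangle Λ a₀))
    (fun p ⟨⟨_, h₂, h₃⟩, h⟩ => neg_nonneg.2 (hneg p (not_le.1 fun h₁ => h ⟨h₁, h₂, h₃⟩) h₂ h₃))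
    (fun p ⟨h₁, h₂, h₃, h₄⟩ => ⟨⟨h₁.le, h₃.le, h₄.le⟩, fun h => h.1.not_gt h₂⟩)
  simp only [Pi.neg_apply, integral_neg] at hgrow hΛ
  obtain ⟨u, hu, hu0⟩ := intermediate_value_Icc hΛb
    (continuous_setIntegral_preisachTriangle_left hν a₀).continuousOn
    (show (0 : ℝ) ∈ Icc _ _ from ⟨by linarith, hc⟩)
  exact ⟨u, hu.2, hu0⟩

end PreisachTriangle

theorem mul_sub_nonneg_of_boundary_le {μ : ℝ × ℝ → ℝ} {b : ℝ → ℝ}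
    (hpos : ∀ α β : ℝ, β < α → b β ≤ α → 0 ≤ μ (α, β)) {p : ℝ × ℝ} (hp : p.2 ≤ p.1)
    (hbp : b p.2 ≤ p.1) : 0 ≤ μ p * (p.1 - p.2) := by
  rcases hp.eq_or_lt with h | h
  · simp [h]
  · exact mul_nonneg (hpos p.1 p.2 h hbp) (sub_nonneg.2 hp)

theorem mul_sub_nonpos_of_le_boundary {μ : ℝ × ℝ → ℝ} {b : ℝ → ℝ}
    (hneg : ∀ α β : ℝ, β < α → α ≤ b β → μ (α, β) ≤ 0) {p : ℝ × ℝ} (hp : p.2 ≤ p.1)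
    (hbp : p.1 ≤ b p.2) : μ p * (p.1 - p.2) ≤ 0 := by
  rcases hp.eq_or_lt with h | h
  · simp [h]
  · exact mul_nonpos_of_nonpos_of_nonneg (hneg p.1 p.2 h hbp) (sub_nonneg.2 hp)

theorem two_sided_preisach_is_butterfly_general
    (μ : ℝ × ℝ → ℝ)
    (hlocint : LocallyIntegrable μ volume)
    (b : ℝ → ℝ) (hb : ∀ β₁ β₂ : ℝ, β₁ ≤ β₂ → b β₂ ≤ b β₁)
    (hpos : ∀ α β : ℝ, β < α → b β ≤ α → 0 ≤ μ (α, β))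
    (hneg : ∀ α β : ℝ, β < α → α ≤ b β → μ (α, β) ≤ 0)
    (α₁ β₁ : ℝ) (hbd : α₁ = b β₁)
    (hdivUp : Filter.Tendsto
      (fun lam : ℝ => ∫ p in {p : ℝ × ℝ |
          α₁ < p.1 ∧ p.1 < lam ∧ β₁ < p.2 ∧ p.2 < p.1},
        μ p * (p.1 - p.2)) Filter.atTop Filter.atTop)
    (hdivLow : Filter.Tendsto
      (fun lam : ℝ => ∫ p in {p : ℝ × ℝ |
          lam < p.2 ∧ p.2 < β₁ ∧ p.2 < p.1 ∧ p.1 < α₁},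
        (-μ p) * (p.1 - p.2)) Filter.atBot Filter.atTop) :
    ∃ umin umax : ℝ, umin ≤ β₁ ∧ α₁ ≤ umax ∧ (umin = β₁ ∨ umax = α₁) ∧
      (∫ p in preisachTriangle umin umax, μ p * (p.1 - p.2)) = 0 := by
  have hν : LocallyIntegrable (fun p : ℝ × ℝ => μ p * (p.1 - p.2)) volume :=
    hlocint.mul_continuous (continuous_fst.sub continuous_snd)
  rcases le_total (∫ p in preisachTriangle β₁ α₁, μ p * (p.1 - p.2)) 0 with hc | hc
  · obtain ⟨u, hu, hu0⟩ := exists_setIntegral_preisachTriangle_right_eq_zero hν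
      (fun p h₁ h₂ h₃ =>
        mul_sub_nonneg_of_boundary_le hpos h₂ (((hb _ _ h₁).trans hbd.ge).trans h₃.le))
      hc hdivUp
    exact ⟨β₁, u, le_rfl, hu, Or.inl rfl, hu0⟩
  · obtain ⟨u, hu, hu0⟩ := exists_setIntegral_preisachTriangle_left_eq_zero hν
      (fun p h₁ h₂ h₃ =>
        mul_sub_nonpos_of_le_boundary hneg h₂ (h₃.trans (hbd.le.trans (hb _ _ h₁.le))))
      hc (by simpa only [lowerMomentRegion, neg_mul] using hdivLow)
    exact ⟨u, α₁, hu, le_rfl, Or.inr rfl, hu0⟩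

theorem two_sided_preisach_is_butterfly
    (μ : ℝ × ℝ → ℝ)
    (hlocbdd : ∀ p : ℝ × ℝ, ∃ U ∈ nhds p, ∃ M : ℝ, ∀ q ∈ U, |μ q| ≤ M)
    (hlocint : LocallyIntegrable μ volume)
    (b : ℝ → ℝ) (hb : ∀ β₁ β₂ : ℝ, β₁ ≤ β₂ → b β₂ ≤ b β₁)
    (hpos : ∀ α β : ℝ, β < α → b β ≤ α → 0 ≤ μ (α, β))
    (hneg : ∀ α β : ℝ, β < α → α ≤ b β → μ (α, β) ≤ 0)
    (α₁ β₁ : ℝ) (hbd : α₁ = b β₁) (hP : β₁ < α₁)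
    (hdivUp : Filter.Tendsto
      (fun lam : ℝ => ∫ p in {p : ℝ × ℝ |
          α₁ < p.1 ∧ p.1 < lam ∧ β₁ < p.2 ∧ p.2 < p.1},
        μ p * (p.1 - p.2)) Filter.atTop Filter.atTop)
    (hdivLow : Filter.Tendsto
      (fun lam : ℝ => ∫ p in {p : ℝ × ℝ |
          lam < p.2 ∧ p.2 < β₁ ∧ p.2 < p.1 ∧ p.1 < α₁},
        (-μ p) * (p.1 - p.2)) Filter.atBot Filter.atTop) :
    ∃ umin umax : ℝ, umin ≤ β₁ ∧ α₁ ≤ umax ∧ (umin = β₁ ∨ umax = α₁) ∧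
      (∫ p in preisachTriangle umin umax, μ p * (p.1 - p.2)) = 0 :=
  two_sided_preisach_is_butterfly_general μ hlocint b hb hpos hneg α₁ β₁ hbd hdivUp hdivLow
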